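/- arXiv:2103.05589 — 3 statements merged into one kernel-verified Lean document; each statement's English description precedes it below -/
import Mathlib

section
/- Let R be a commutative ring, a, b, c, d ∈ R, k a natural number, and μ : R[z] → R an R-linear map on the univariate polynomial ring. Then in the polynomial ring R[X,Y] one has Σ_{j=0}^{k} (−1)^j C(k,j) · μ((a·z + b)^j (c·z + d)^{k−j}) · X^{k−j} Y^j = Σ_{ℓ=0}^{k} (−1)^ℓ C(k,ℓ) · μ(z^ℓ) · (dX − bY)^{k−ℓ} (−cX + aY)^ℓ. -/
/-!
Extend `μ` `S`-linearly to `ψ : S[z] → S` for an `R`-algebra `S` and points `x y : S`. Both sides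
are then `ψ (((cz + d) x - (az + b) y) ^ k)`: the left side expands this binomially in the
pair `x, y`, the right side in the pair `1, z` after regrouping
`(cz + d) x - (az + b) y = (dx - by) - (-cx + ay) z`. Taking `S = R[X,Y]` and the generic
point `(X, Y)` gives the theorem.
-/

open Polynomial Finset

theorem sub_pow_eq_sum_neg_one_pow {A : Type*} [CommRing A] (x y : A) (k : ℕ) :
    (x - y) ^ k = ∑ j ∈ range (k + 1), (-1) ^ j * (k.choose j : A) * y ^ j * x ^ (k - j) := by
  rw [sub_eq_neg_add, add_pow]
  refine sum_congr rfl fun j _ => ?_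
  rw [neg_pow]
  ring

theorem LinearMap.map_smul_sub_smul_pow {S B : Type*} [CommRing S] [CommRing B] [Algebra S B]
    (ψ : B →ₗ[S] S) (s t : S) (x y : B) (k : ℕ) :
    ψ ((s • x - t • y) ^ k) = ∑ j ∈ Finset.range (k + 1),
      (-1) ^ j * (k.choose j : S) * s ^ (k - j) * t ^ j * ψ (y ^ j * x ^ (k - j)) := by
  rw [sub_pow_eq_sum_neg_one_pow, map_sum]
  refine sum_congr rfl fun j _ => ?_
  have h : (-1) ^ j * (k.choose j : B) * (t • y) ^ j * (s • x) ^ (k - j)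
      = ((-1) ^ j * (k.choose j : S) * s ^ (k - j) * t ^ j) • (y ^ j * x ^ (k - j)) := by
    simp only [Algebra.smul_def, map_mul, map_pow, map_neg, map_one, map_natCast]
    ring
  rw [h, map_smul, smul_eq_mul]

namespace Polynomial

variable {R : Type*} (S : Type*) [CommRing R] [CommRing S] [Algebra R S]

noncomputable def baseChangeFunctional (μ : R[X] →ₗ[R] R) : S[X] →ₗ[S] S :=
  lsum fun n => LinearMap.toSpanSingleton S S (algebraMap R S (μ (X ^ n)))

theorem baseChangeFunctional_map (μ : R[X] →ₗ[R] R) (p : R[X]) :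
    baseChangeFunctional S μ (p.map (algebraMap R S)) = algebraMap R S (μ p) := by
  induction p using Polynomial.induction_on' with
  | add p q hp hq => simp only [Polynomial.map_add, map_add, hp, hq]
  | monomial n r =>
    rw [Polynomial.map_monomial, baseChangeFunctional, lsum_apply,
      sum_monomial_index _ _ (by simp), LinearMap.toSpanSingleton_apply, smul_eq_mul,
      ← C_mul_X_pow_eq_monomial, ← smul_eq_C_mul, map_smul, smul_eq_mul, map_mul]

end Polynomial

theorem specialization_equivariance_eval {R S : Type*} [CommRing R] [CommRing S]
    [Algebra R S] (a b c d : R) (k : ℕ) (μ : R[X] →ₗ[R] R) (x y : S) :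
    ∑ j ∈ range (k + 1), (-1 : S) ^ j * (k.choose j : S) *
        algebraMap R S (μ ((C a * X + C b) ^ j * (C c * X + C d) ^ (k - j))) *
          x ^ (k - j) * y ^ j
      = ∑ ℓ ∈ range (k + 1), (-1 : S) ^ ℓ * (k.choose ℓ : S) * algebraMap R S (μ (X ^ ℓ)) *
          (algebraMap R S d * x - algebraMap R S b * y) ^ (k - ℓ) *
          (-algebraMap R S c * x + algebraMap R S a * y) ^ ℓ := by
  set ψ := baseChangeFunctional S μ
  set F : S[X] :=
    x • (C c * X + C d).map (algebraMap R S) - y • (C a * X + C b).map (algebraMap R S)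
  have hF : F = (algebraMap R S d * x - algebraMap R S b * y) • 1
      - (-algebraMap R S c * x + algebraMap R S a * y) • X := by
    simp only [F, Polynomial.map_add, Polynomial.map_mul, Polynomial.map_C, Polynomial.map_X,
      smul_eq_C_mul, map_sub, map_add, map_mul, map_neg]
    ring
  calc _ = ψ (F ^ k) := by
        rw [LinearMap.map_smul_sub_smul_pow]
        refine sum_congr rfl fun j _ => ?_
        rw [← Polynomial.map_pow, ← Polynomial.map_pow, ← Polynomial.map_mul,
          baseChangeFunctional_map]
        ring
    _ = _ := by
        rw [hF, LinearMap.map_smul_sub_smul_pow]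
        refine sum_congr rfl fun ℓ _ => ?_
        rw [one_pow, mul_one, ← Polynomial.map_X (algebraMap R S), ← Polynomial.map_pow,
          baseChangeFunctional_map, neg_pow]
        ring

open Polynomial MvPolynomial Finset in
/-- For a commutative ring `R`, `a b c d ∈ R`, `k : ℕ`, and an `R`-linear
functional `μ` on `R[z]`, one has, in `R[X,Y]`,
`Σ_{j=0}^{k} (−1)^j C(k,j) μ((az+b)^j (cz+d)^{k−j}) X^{k−j} Y^j
  = Σ_{ℓ=0}^{k} (−1)^ℓ C(k,ℓ) μ(z^ℓ) (dX − bY)^{k−ℓ} (−cX + aY)^ℓ`. -/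
theorem specialization_equivariance (R : Type*) [CommRing R] (a b c d : R) (k : ℕ)
    (μ : Polynomial R →ₗ[R] R) :
    ∑ j ∈ range (k + 1),
        (-1 : MvPolynomial (Fin 2) R) ^ j * (k.choose j : MvPolynomial (Fin 2) R) *
          MvPolynomial.C (μ ((Polynomial.C a * Polynomial.X + Polynomial.C b) ^ j *
              (Polynomial.C c * Polynomial.X + Polynomial.C d) ^ (k - j))) *
          (MvPolynomial.X 0) ^ (k - j) * (MvPolynomial.X 1) ^ j
      = ∑ ℓ ∈ range (k + 1),
          (-1 : MvPolynomial (Fin 2) R) ^ ℓ * (k.choose ℓ : MvPolynomial (Fin 2) R) *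
            MvPolynomial.C (μ (Polynomial.X ^ ℓ)) *
            (MvPolynomial.C d * MvPolynomial.X 0 - MvPolynomial.C b * MvPolynomial.X 1) ^ (k - ℓ) *
            (-(MvPolynomial.C c) * MvPolynomial.X 0 + MvPolynomial.C a * MvPolynomial.X 1) ^ ℓ := by
  simpa only [MvPolynomial.algebraMap_eq] using
    specialization_equivariance_eval a b c d k μ (MvPolynomial.X 0 : MvPolynomial (Fin 2) R)
      (MvPolynomial.X 1)
end

section
/- Fix a natural number n. Let V_{n,n} be the ℚ-subspace of ℚ[X₁, Y₁, X₂, Y₂] consisting of polynomials homogeneous of degree n in the pair (X₁, Y₁) and homogeneous of degree n in the pair (X₂, Y₂), and for m ∈ ℕ let V_m be the ℚ-subspace of ℚ[X, Y] of homogeneous polynomials of degree m. Let ∇ = ∂²/∂X₂∂Y₁ − ∂²/∂X₁∂Y₂. Then the ℚ-linear map V_{n,n} → ⊕_{i=0}^{n} V_{2n−2i} sending P to the tuple whose i-th entry is the polynomial obtained from ∇^i(P) by substituting X₁ = X₂ = X and Y₁ = Y₂ = Y, is bijective. -/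
open MvPolynomial

/-- The differential operator `∇ = ∂²/∂X₂∂Y₁ − ∂²/∂X₁∂Y₂` on `R[X₁,Y₁,X₂,Y₂]`,
where the variables `X₁, Y₁, X₂, Y₂` are indexed by `0, 1, 2, 3 : Fin 4`. -/
noncomputable def nabla (R : Type*) [CommRing R] :
    Module.End R (MvPolynomial (Fin 4) R) :=
  (pderiv (2 : Fin 4)).toLinearMap ∘ₗ (pderiv (1 : Fin 4)).toLinearMap -
    (pderiv (0 : Fin 4)).toLinearMap ∘ₗ (pderiv (3 : Fin 4)).toLinearMap

/-- The weight function on the four variables `X₁, Y₁, X₂, Y₂` recording the bidegree: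
`X₁, Y₁` have weight `(1,0)` and `X₂, Y₂` have weight `(0,1)`, so that the polynomials
of weighted degree `(n, n)` are exactly those homogeneous of degree `n` in `(X₁, Y₁)`
and of degree `n` in `(X₂, Y₂)`. -/
def bideg : Fin 4 → ℕ × ℕ := ![(1, 0), (1, 0), (0, 1), (0, 1)]

/-- The `i`-th Clebsch–Gordan projection: apply `∇^i` and then substitute
`X₁ = X₂ = X`, `Y₁ = Y₂ = Y`. -/
noncomputable def cgProj (i : ℕ) (P : MvPolynomial (Fin 4) ℚ) : MvPolynomial (Fin 2) ℚ :=
  aeval ![X 0, X 1, X 0, X 1] ((nabla ℚ ^ i) P)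

/-!
Let `Ω = X₁Y₂ − X₂Y₁` (`bracket`). It vanishes on the diagonal `X₁ = X₂, Y₁ = Y₂`, and Euler's
identity gives `∇(ΩP) = Ω∇P − (d + 2)P` for `P` homogeneous of degree `d`; iterating,
`∇^(k+1)(ΩP) = Ω∇^(k+1)P − (k+1)(d+2−k)∇^k P`. So the `(k+1)`-st projection of `ΩM` is a nonzero
multiple of the `k`-th projection of `M`. Surjectivity follows by induction on `n`: lift the `0`-th
component to some `L` of bidegree `(n, n)` and correct the others by adding `ΩM`, with `M` of
bidegree `(n−1, n−1)` given by induction. Injectivity then follows from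
`dim V_{n,n} ≤ (n+1)² = ∑ᵢ (2n − 2i + 1)`.
-/

namespace MvPolynomial

variable {σ R M : Type*}

theorem finrank_weightedHomogeneousSubmodule [CommRing R] [Nontrivial R] [AddCommMonoid M]
    (w : σ → M) (m : M) :
    Module.finrank R (weightedHomogeneousSubmodule R w m) =
      Nat.card {d : σ →₀ ℕ | Finsupp.weight w d = m} := by
  rw [weightedHomogeneousSubmodule_eq_finsupp_supported]
  exact Module.finrank_eq_nat_card_basis (basisRestrictSupport R _)

theorem finrank_homogeneousSubmodule [CommRing R] [Nontrivial R] [Fintype σ] (n : ℕ) :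
    Module.finrank R (homogeneousSubmodule σ R n) = (Fintype.card σ + n - 1).choose n := by
  classical
  have hS : {d : σ →₀ ℕ | Finsupp.weight 1 d = n} =
      ↑((Finset.univ : Finset σ).finsuppAntidiag n) := by
    ext d
    simp [Finsupp.weight_eq_sum]
  rw [← weightedHomogeneousSubmodule_one, finrank_weightedHomogeneousSubmodule, hS,
    Nat.card_coe_set_eq, Set.ncard_coe_finset, Finset.card_finsuppAntidiag_nat_eq_choose,
    Finset.card_univ]

instance [CommSemiring R] [Finite σ] (n : ℕ) : Module.Finite R (homogeneousSubmodule σ R n) :=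
  Module.Finite.iff_fg.mpr (homogeneousSubmodule_fg σ R n)

end MvPolynomial

section Bidegree

variable {R : Type*} [CommSemiring R]

theorem weight_bideg (e : Fin 4 →₀ ℕ) : Finsupp.weight bideg e = (e 0 + e 1, e 2 + e 3) := by
  simp [Finsupp.weight_eq_sum, Fin.sum_univ_four, bideg, Prod.ext_iff]

theorem MvPolynomial.IsWeightedHomogeneous.isHomogeneous_of_bideg {P : MvPolynomial (Fin 4) R}
    {p q : ℕ} (h : P.IsWeightedHomogeneous bideg (p, q)) : P.IsHomogeneous (p + q) := by
  intro e he
  have := h he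
  simp only [weight_bideg, Prod.mk.injEq] at this
  simp only [Finsupp.weight_eq_sum, Pi.one_apply, smul_eq_mul, mul_one, Fin.sum_univ_four]
  omega

theorem exists_isWeightedHomogeneous_bideg_rename_eq {p q : ℕ} {Q : MvPolynomial (Fin 2) R}
    (hQ : Q.IsHomogeneous (p + q)) :
    ∃ P, P.IsWeightedHomogeneous bideg (p, q) ∧ rename ![0, 1, 0, 1] P = Q := by
  suffices homogeneousSubmodule (Fin 2) R (p + q) ≤
      (weightedHomogeneousSubmodule R bideg (p, q)).map (rename ![0, 1, 0, 1]).toLinearMap by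
    simpa using this hQ
  rw [homogeneousSubmodule_eq_finsupp_supported, AddMonoidAlgebra.supported_eq_span_single,
    Submodule.span_le]
  rintro _ ⟨e, he, rfl⟩
  have hX := isWeightedHomogeneous_X R bideg
  rw [Set.mem_ofPred_eq, Finsupp.degree_eq_sum, Fin.sum_univ_two] at he
  obtain ⟨a, b, hab, ha, hb⟩ : ∃ a b, a + b = e 0 ∧ a ≤ p ∧ b ≤ q :=
    ⟨min (e 0) p, e 0 - min (e 0) p, by omega, by omega, by omega⟩
  refine ⟨X 0 ^ a * X 1 ^ (p - a) * X 2 ^ b * X 3 ^ (q - b), ?_, ?_⟩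
  · rw [SetLike.mem_coe, mem_weightedHomogeneousSubmodule]
    convert (((hX 0).pow a).mul ((hX 1).pow (p - a))).mul ((hX 2).pow b) |>.mul
      ((hX 3).pow (q - b)) using 1
    simp only [bideg, Matrix.cons_val_zero, Matrix.cons_val_one, Matrix.cons_val, Prod.smul_mk,
      smul_eq_mul, mul_one, mul_zero, Prod.mk_add_mk, Prod.ext_iff]
    omega
  · simp only [AlgHom.toLinearMap_apply, map_mul, map_pow, rename_X, Matrix.cons_val_zero,
      Matrix.cons_val_one, Matrix.cons_val, single_eq_monomial, monomial_eq, C_1, one_mul,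
      Finsupp.prod_fintype, pow_zero, implies_true, Fin.prod_univ_two]
    rw [← hab, show e 1 = p - a + (q - b) by omega]
    ring

end Bidegree

noncomputable def bracket (R : Type*) [CommRing R] : MvPolynomial (Fin 4) R :=
  X 0 * X 3 - X 2 * X 1

section Nabla

variable {R : Type*} [CommRing R] {P : MvPolynomial (Fin 4) R} {d : ℕ}

theorem nabla_apply (P : MvPolynomial (Fin 4) R) :
    nabla R P = pderiv 2 (pderiv 1 P) - pderiv 0 (pderiv 3 P) :=
  rfl

theorem MvPolynomial.IsHomogeneous.nabla (h : P.IsHomogeneous d) :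
    (_root_.nabla R P).IsHomogeneous (d - 2) := by
  rw [nabla_apply, show d - 2 = d - 1 - 1 by omega]
  exact h.pderiv.pderiv.sub h.pderiv.pderiv

theorem MvPolynomial.IsHomogeneous.nabla_pow (h : P.IsHomogeneous d) (k : ℕ) :
    ((_root_.nabla R ^ k) P).IsHomogeneous (d - 2 * k) := by
  induction k with
  | zero => simpa using h
  | succ k ih =>
    rw [pow_succ', Module.End.mul_apply, show d - 2 * (k + 1) = d - 2 * k - 2 by omega]
    exact ih.nabla

theorem nabla_bracket_mul (h : P.IsHomogeneous d) :
    nabla R (bracket R * P) = bracket R * nabla R P - (d + 2) • P := by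
  have euler := h.sum_X_mul_pderiv
  rw [Fin.sum_univ_four] at euler
  simp only [nabla_apply, bracket, Derivation.leibniz, map_sub, map_add, pderiv_X, Pi.single_apply,
    smul_eq_mul, nsmul_eq_mul, Fin.reduceEq, ↓reduceIte, map_neg, mul_zero, mul_one, add_zero,
    zero_add, sub_zero, zero_sub, mul_neg, Nat.cast_add, Nat.cast_ofNat] at euler ⊢
  linear_combination -euler

theorem nabla_pow_succ_bracket_mul (h : P.IsHomogeneous d) {k : ℕ} (hk : 2 * k ≤ d) :
    (nabla R ^ (k + 1)) (bracket R * P) =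
      bracket R * (nabla R ^ (k + 1)) P - ((k + 1) * (d + 2 - k)) • (nabla R ^ k) P := by
  induction k with
  | zero => simpa using nabla_bracket_mul h
  | succ k ih =>
    have hcoeff :
        (d - 2 * (k + 1) + 2) + (k + 1) * (d + 2 - k) = (k + 1 + 1) * (d + 2 - (k + 1)) := by
      zify [hk, (by omega : k ≤ d + 2), (by omega : k + 1 ≤ d + 2)]
      ring
    have hsucc (j : ℕ) (Q : MvPolynomial (Fin 4) R) :
        (nabla R ^ (j + 1)) Q = nabla R ((nabla R ^ j) Q) := by
      rw [pow_succ', Module.End.mul_apply]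
    rw [hsucc (k + 1), ih (by omega), map_sub, map_nsmul, nabla_bracket_mul (h.nabla_pow (k + 1)),
      ← hsucc, ← hsucc, sub_sub, ← add_nsmul, hcoeff]

theorem bracket_isWeightedHomogeneous :
    (bracket R).IsWeightedHomogeneous bideg (1, 1) := by
  have hX := isWeightedHomogeneous_X R bideg
  exact (weightedHomogeneousSubmodule R bideg (1, 1)).sub_mem ((hX 0).mul (hX 3))
    ((hX 2).mul (hX 1))

theorem rename_bracket : rename (![0, 1, 0, 1] : Fin 4 → Fin 2) (bracket R) = 0 := by
  simp [bracket, mul_comm]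

end Nabla

section Projection

variable {P : MvPolynomial (Fin 4) ℚ}

theorem cgProj_eq_rename (i : ℕ) (P : MvPolynomial (Fin 4) ℚ) :
    cgProj i P = rename ![0, 1, 0, 1] ((nabla ℚ ^ i) P) := by
  rw [cgProj, rename_eq_aeval]
  congr
  funext j
  fin_cases j <;> rfl

theorem cgProj_zero (P : MvPolynomial (Fin 4) ℚ) : cgProj 0 P = rename ![0, 1, 0, 1] P := by
  rw [cgProj_eq_rename, pow_zero, Module.End.one_apply]

noncomputable def cgProjₗ (i : ℕ) : MvPolynomial (Fin 4) ℚ →ₗ[ℚ] MvPolynomial (Fin 2) ℚ :=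
  (rename ![0, 1, 0, 1]).toLinearMap ∘ₗ nabla ℚ ^ i

theorem cgProjₗ_apply (i : ℕ) (P : MvPolynomial (Fin 4) ℚ) : cgProjₗ i P = cgProj i P :=
  (cgProj_eq_rename i P).symm

theorem isHomogeneous_cgProj {n : ℕ} (hP : P.IsWeightedHomogeneous bideg (n, n)) (i : ℕ) :
    (cgProj i P).IsHomogeneous (2 * n - 2 * i) := by
  rw [cgProj_eq_rename, two_mul n]
  exact (hP.isHomogeneous_of_bideg.nabla_pow i).rename_isHomogeneous

theorem cgProj_succ_bracket_mul {d k : ℕ} (hP : P.IsHomogeneous d) (hk : 2 * k ≤ d) :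
    cgProj (k + 1) (bracket ℚ * P) = -(((k + 1) * (d + 2 - k) : ℕ) : ℚ) • cgProj k P := by
  rw [cgProj_eq_rename, cgProj_eq_rename, nabla_pow_succ_bracket_mul hP hk, map_sub, map_mul,
    rename_bracket, zero_mul, zero_sub, map_nsmul, neg_smul, Nat.cast_smul_eq_nsmul]

theorem exists_cgProj_eq (n : ℕ) (Q : Fin (n + 1) → MvPolynomial (Fin 2) ℚ)
    (hQ : ∀ i, (Q i).IsHomogeneous (2 * n - 2 * i)) :
    ∃ P : MvPolynomial (Fin 4) ℚ, P.IsWeightedHomogeneous bideg (n, n) ∧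
      ∀ i : Fin (n + 1), cgProj i P = Q i := by
  induction n with
  | zero =>
    obtain ⟨L, hL, hLQ⟩ := exists_isWeightedHomogeneous_bideg_rename_eq (p := 0) (q := 0)
      (by simpa using hQ 0)
    refine ⟨L, hL, fun i => ?_⟩
    rw [Fin.fin_one_eq_zero i, Fin.val_zero, cgProj_zero, hLQ]
  | succ n ih =>
    obtain ⟨L, hL, hLQ⟩ := exists_isWeightedHomogeneous_bideg_rename_eq (p := n + 1) (q := n + 1)
      (by simpa [two_mul] using hQ 0)
    let c (j : ℕ) : ℚ := ((j + 1) * (n + n + 2 - j) : ℕ)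
    have hc (j : Fin (n + 1)) : c j ≠ 0 := by
      have := j.is_le
      simp only [c, Nat.cast_ne_zero]
      exact mul_ne_zero (Nat.succ_ne_zero _) (by omega)
    obtain ⟨M, hM, hMQ⟩ := ih (fun j => (c j)⁻¹ • (cgProj (j + 1) L - Q j.succ)) fun j => by
      have hdeg : 2 * (n + 1) - 2 * (j + 1) = 2 * n - 2 * j := by omega
      refine Submodule.smul_mem (homogeneousSubmodule _ _ _) _ (Submodule.sub_mem _ ?_ ?_)
      · exact hdeg ▸ isHomogeneous_cgProj hL (j + 1)
      · exact hdeg ▸ hQ j.succ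
    have hBM : (bracket ℚ * M).IsWeightedHomogeneous bideg (n + 1, n + 1) := by
      simpa [add_comm] using bracket_isWeightedHomogeneous.mul hM
    refine ⟨L + bracket ℚ * M, hL.add hBM, fun i => ?_⟩
    cases i using Fin.cases with
    | zero =>
      rw [Fin.val_zero, cgProj_zero, map_add, map_mul, rename_bracket, zero_mul, add_zero, hLQ]
    | succ j =>
      rw [Fin.val_succ, ← cgProjₗ_apply, map_add, cgProjₗ_apply, cgProjₗ_apply,
        cgProj_succ_bracket_mul hM.isHomogeneous_of_bideg (by omega), hMQ j, smul_smul, neg_mul,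
        mul_inv_cancel₀ (hc j), neg_smul, one_smul]
      abel

end Projection

section Dimension

theorem finrank_homogeneousSubmodule_fin_two {R : Type*} [CommRing R] [Nontrivial R] (m : ℕ) :
    Module.finrank R (homogeneousSubmodule (Fin 2) R m) = m + 1 := by
  rw [finrank_homogeneousSubmodule, Fintype.card_fin, show 2 + m - 1 = m + 1 by omega,
    Nat.choose_succ_self_right]

theorem finrank_weightedHomogeneousSubmodule_bideg_le {R : Type*} [CommRing R] [Nontrivial R]
    (n : ℕ) : Module.finrank R (weightedHomogeneousSubmodule R bideg (n, n)) ≤ (n + 1) ^ 2 := by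
  rw [finrank_weightedHomogeneousSubmodule]
  have hw (d : {d : Fin 4 →₀ ℕ | Finsupp.weight bideg d = (n, n)}) :
      d.1 0 + d.1 1 = n ∧ d.1 2 + d.1 3 = n := by
    simpa [weight_bideg] using d.2
  let f (d : {d : Fin 4 →₀ ℕ | Finsupp.weight bideg d = (n, n)}) : Fin (n + 1) × Fin (n + 1) :=
    (⟨d.1 0, by grind⟩, ⟨d.1 2, by grind⟩)
  have hf : Function.Injective f := by
    intro d d' h
    simp only [f, Prod.mk.injEq, Fin.mk.injEq] at h
    have := hw d
    have := hw d'
    ext i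
    fin_cases i <;> simp only [Fin.zero_eta, Fin.mk_one, Fin.reduceFinMk] <;> omega
  calc _ ≤ Nat.card (Fin (n + 1) × Fin (n + 1)) := Nat.card_le_card_of_injective f hf
    _ = (n + 1) ^ 2 := by simp [sq]

theorem sum_fin_two_mul_sub_two_mul_add_one (n : ℕ) :
    ∑ i : Fin (n + 1), (2 * n - 2 * i + 1) = (n + 1) ^ 2 := by
  induction n with
  | zero => rfl
  | succ n ih =>
    rw [Fin.sum_univ_succ]
    have hshift (i : ℕ) : 2 * (n + 1) - 2 * (i + 1) = 2 * n - 2 * i := by omega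
    simp only [Fin.val_zero, mul_zero, Nat.sub_zero, Fin.val_succ, hshift, ih]
    ring

theorem finrank_pi_homogeneousSubmodule (n : ℕ) :
    Module.finrank ℚ (Π i : Fin (n + 1), homogeneousSubmodule (Fin 2) ℚ (2 * n - 2 * i)) =
      (n + 1) ^ 2 := by
  rw [Module.finrank_pi_fintype]
  simp only [finrank_homogeneousSubmodule_fin_two]
  exact sum_fin_two_mul_sub_two_mul_add_one n

end Dimension

noncomputable def cgMap (n : ℕ) : weightedHomogeneousSubmodule ℚ bideg (n, n) →ₗ[ℚ]
    Π i : Fin (n + 1), homogeneousSubmodule (Fin 2) ℚ (2 * n - 2 * i) :=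
  LinearMap.pi fun i => ((cgProjₗ i).domRestrict _).codRestrict _ fun P => by
    rw [LinearMap.domRestrict_apply, cgProjₗ_apply]
    exact isHomogeneous_cgProj P.2 i

theorem cgMap_apply (n : ℕ) (P : weightedHomogeneousSubmodule ℚ bideg (n, n)) (i : Fin (n + 1)) :
    (cgMap n P i : MvPolynomial (Fin 2) ℚ) = cgProj i P :=
  cgProjₗ_apply _ _

theorem cgMap_surjective (n : ℕ) : Function.Surjective (cgMap n) := by
  intro Q
  obtain ⟨P, hP, hPQ⟩ := exists_cgProj_eq n (fun i => Q i) fun i => (Q i).2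
  refine ⟨⟨P, hP⟩, funext fun i => Subtype.ext ?_⟩
  rw [cgMap_apply]
  exact hPQ i

theorem cgMap_bijective (n : ℕ) : Function.Bijective (cgMap n) := by
  have : Module.Finite ℚ (weightedHomogeneousSubmodule ℚ bideg (n, n)) :=
    Submodule.finiteDimensional_of_le (S₂ := homogeneousSubmodule (Fin 4) ℚ (n + n))
      fun _ hP => IsWeightedHomogeneous.isHomogeneous_of_bideg hP
  refine OrzechProperty.bijective_of_surjective_of_finrank_le _ (cgMap_surjective n) ?_
  rw [finrank_pi_homogeneousSubmodule]
  exact finrank_weightedHomogeneousSubmodule_bideg_le n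

/-- Clebsch–Gordan decomposition: the map `V_{n,n} → ⊕_{i=0}^{n} V_{2n−2i}`,
`P ↦ (cgProj i P)_{i}`, is well defined and bijective. -/
theorem clebsch_gordan (n : ℕ) :
    (∀ P ∈ weightedHomogeneousSubmodule ℚ bideg (n, n), ∀ i : Fin (n + 1),
        cgProj (i : ℕ) P ∈ homogeneousSubmodule (Fin 2) ℚ (2 * n - 2 * (i : ℕ))) ∧
    (∀ Q : (i : Fin (n + 1)) → homogeneousSubmodule (Fin 2) ℚ (2 * n - 2 * (i : ℕ)),
        ∃! P, P ∈ weightedHomogeneousSubmodule ℚ bideg (n, n) ∧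
          ∀ i : Fin (n + 1), cgProj (i : ℕ) P = (Q i : MvPolynomial (Fin 2) ℚ)) := by
  refine ⟨fun P hP i => ?_, fun Q => ?_⟩
  · exact isHomogeneous_cgProj hP i
  have hcg (P : weightedHomogeneousSubmodule ℚ bideg (n, n)) :
      cgMap n P = Q ↔ ∀ i : Fin (n + 1), cgProj i P = (Q i : MvPolynomial (Fin 2) ℚ) := by
    simp only [funext_iff, Subtype.ext_iff, cgMap_apply]
  obtain ⟨P, hPQ, hunique⟩ := (cgMap_bijective n).existsUnique Q
  refine ⟨P, ⟨P.2, (hcg P).mp hPQ⟩, fun P' ⟨hP', hP'Q⟩ => ?_⟩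
  exact congr_arg Subtype.val (hunique ⟨P', hP'⟩ ((hcg _).mpr hP'Q))
end

section
/- Let X be a compact topological space, R a commutative ring, and A a commutative R-algebra with structure map φ : R → A. Then the natural A-linear map LC(X, R) ⊗_R A → LC(X, A), determined by f ⊗ a ↦ a · (φ ∘ f), is bijective, where LC(X, R) denotes the R-module of locally constant functions X → R and LC(X, A) the A-module of locally constant functions X → A. -/
/-!
A compact space has only finite discrete quotients, and every locally constant function factors
through one of them; since these quotients form a directed system, every element of
`LC(X, R) ⊗[R] A` already comes from `(S → R) ⊗[R] A` for a single finite discrete quotient `S`.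
For finite `S` the comparison map `(S → R) ⊗[R] A → (S → A)` is an isomorphism, and pulling back
along the surjection `X → S` is injective, which gives injectivity; surjectivity follows by
factoring a given `g : LC(X, A)` through its own discrete quotient.
-/

open TensorProduct

namespace DiscreteQuotient

variable {X : Type*} [TopologicalSpace X]

def compProjₗ (S : DiscreteQuotient X) (R M : Type*) [Semiring R] [AddCommMonoid M]
    [Module R M] : (S → M) →ₗ[R] LocallyConstant X M where
  toFun h := ⟨h ∘ S.proj, S.proj_isLocallyConstant.comp h⟩
  map_add' _ _ := rfl
  map_smul' _ _ := rfl

variable {S : DiscreteQuotient X} {R M : Type*} [Semiring R] [AddCommMonoid M] [Module R M]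

@[simp]
lemma compProjₗ_apply (h : S → M) (x : X) : compProjₗ S R M h x = h (S.proj x) := rfl

lemma compProjₗ_injective : Function.Injective (compProjₗ S R M) := fun _ _ h =>
  S.proj_surjective.injective_comp_right (congrArg DFunLike.coe h)

lemma compProjₗ_comp_funLeft_ofLE {S' : DiscreteQuotient X} (hSS' : S ≤ S') :
    compProjₗ S R M ∘ₗ LinearMap.funLeft R M (ofLE hSS') = compProjₗ S' R M := by
  ext h x
  simp [ofLE_proj]

end DiscreteQuotient

open DiscreteQuotient

lemma LocallyConstant.compProjₗ_lift {X M : Type*} [TopologicalSpace X] (R : Type*) [Semiring R]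
    [AddCommMonoid M] [Module R M] (f : LocallyConstant X M) :
    compProjₗ f.discreteQuotient R M f.lift = f :=
  rfl

lemma LocallyConstant.exists_rTensor_compProjₗ_eq {X R A : Type*} [TopologicalSpace X]
    [CommSemiring R] [AddCommMonoid A] [Module R A] (t : LocallyConstant X R ⊗[R] A) :
    ∃ (S : DiscreteQuotient X) (u : (S → R) ⊗[R] A), (compProjₗ S R R).rTensor A u = t := by
  induction t using TensorProduct.induction_on with
  | zero => exact ⟨⊤, 0, map_zero _⟩
  | tmul f a => exact ⟨f.discreteQuotient, f.lift ⊗ₜ a, rfl⟩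
  | add t₁ t₂ ih₁ ih₂ =>
    obtain ⟨S₁, u₁, rfl⟩ := ih₁
    obtain ⟨S₂, u₂, rfl⟩ := ih₂
    let restrict {S : DiscreteQuotient X} (h : S₁ ⊓ S₂ ≤ S) :=
      (LinearMap.funLeft R R (ofLE h)).rTensor A
    refine ⟨S₁ ⊓ S₂, restrict inf_le_left u₁ + restrict inf_le_right u₂, ?_⟩
    simp only [restrict, map_add, ← LinearMap.comp_apply, ← LinearMap.rTensor_comp,
      compProjₗ_comp_funLeft_ofLE]

lemma TensorProduct.bijective_piScalarRightHom_comm (R M ι : Type*) [CommSemiring R]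
    [AddCommMonoid M] [Module R M] [Finite ι] :
    Function.Bijective fun u : (ι → R) ⊗[R] M =>
      piScalarRightHom R R M ι (TensorProduct.comm R _ M u) := by
  classical
  have := Fintype.ofFinite ι
  exact ((TensorProduct.comm R _ M).trans (piScalarRight R R M ι)).bijective

lemma apply_rTensor_compProjₗ {X R A : Type*} [TopologicalSpace X] [CommSemiring R]
    [CommSemiring A] [Algebra R A] {T : LocallyConstant X R ⊗[R] A →ₗ[R] LocallyConstant X A}
    (hT : ∀ (f : LocallyConstant X R) (a : A), T (f ⊗ₜ a) = a • f.map (algebraMap R A))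
    (S : DiscreteQuotient X) (u : (S → R) ⊗[R] A) :
    T ((compProjₗ S R R).rTensor A u) =
      compProjₗ S R A (piScalarRightHom R R A S (TensorProduct.comm R _ A u)) := by
  induction u using TensorProduct.induction_on with
  | zero => simp
  | tmul h a =>
    ext x
    simp [hT, Algebra.smul_def, mul_comm]
  | add u₁ u₂ ih₁ ih₂ => simp only [map_add, ih₁, ih₂]

/-- For a compact space `X` and a commutative `R`-algebra `A`, the natural map
`LC(X, R) ⊗_R A → LC(X, A)` determined by `f ⊗ a ↦ a • (φ ∘ f)` (where
`φ : R → A` is the structure map) is bijective. -/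
theorem locallyConstant_baseChange (X : Type*) [TopologicalSpace X] [CompactSpace X]
    (R A : Type*) [CommRing R] [CommRing A] [Algebra R A]
    (T : LocallyConstant X R ⊗[R] A →ₗ[R] LocallyConstant X A)
    (hT : ∀ (f : LocallyConstant X R) (a : A),
      T (f ⊗ₜ a) = a • f.map (algebraMap R A)) :
    Function.Bijective T := by
  have hfin (S : DiscreteQuotient X) := TensorProduct.bijective_piScalarRightHom_comm R A S
  refine ⟨(injective_iff_map_eq_zero T).2 fun t ht => ?_, fun g => ?_⟩
  · obtain ⟨S, u, rfl⟩ := LocallyConstant.exists_rTensor_compProjₗ_eq t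
    rw [apply_rTensor_compProjₗ hT, ← map_zero (compProjₗ S R A)] at ht
    have hu : u = 0 := (hfin S).1 <| by simpa using compProjₗ_injective ht
    rw [hu, map_zero]
  · obtain ⟨u, hu⟩ := (hfin g.discreteQuotient).2 g.lift
    refine ⟨(compProjₗ _ R R).rTensor A u, ?_⟩
    rw [apply_rTensor_compProjₗ hT]
    exact (congrArg (compProjₗ _ R A) hu).trans (g.compProjₗ_lift R)
end
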